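/- arXiv:2307.14536 — 2 statements merged into one kernel-verified Lean document; each statement's English description precedes it below -/
import Mathlib

section
/- The Hellinger distance between the exact posterior μ and the approximate posterior μ^N satisfies d_Hell(μ, μ^N)² ≤ I₁ + I₂ where I₁ = (1/Z)∫_X (e^{−Φ(u)/2} − e^{−Φ^N(u)/2})² μ_0(du) and I₂ = |Z^{−1/2} − (Z^N)^{−1/2}|² ∫_X e^{−Φ^N(u)} μ_0(du). -/
/-! Writing `√(Z⁻¹ e^{-Φ}) = Z^{-1/2} e^{-Φ/2}`, the difference of the two square-root densities
splits as `Z^{-1/2} (e^{-Φ/2} - e^{-Φᴺ/2}) + (Z^{-1/2} - (Zᴺ)^{-1/2}) e^{-Φᴺ/2}`; the inequality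
`(p + q)² ≤ 2 (p² + q²)` bounds the integrand pointwise, and integrating gives `I₁ + I₂`. -/

open MeasureTheory Real

lemma sqrt_inv_mul_exp_neg (t a : ℝ) : √(t⁻¹ * exp (-a)) = 1 / √t * exp (-a / 2) := by
  rw [sqrt_mul' _ (exp_pos _).le, sqrt_inv, exp_half, one_div]

lemma half_sq_mul_sub_mul_le (a b x y : ℝ) :
    1 / 2 * (a * x - b * y) ^ 2 ≤ a ^ 2 * (x - y) ^ 2 + |a - b| ^ 2 * y ^ 2 := by
  have hsplit : a * x - b * y = a * (x - y) + (a - b) * y := by ring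
  rw [hsplit, sq_abs]
  nlinarith [add_sq_le (a := a * (x - y)) (b := (a - b) * y)]

lemma half_sq_sqrt_sub_sqrt_le {Z : ℝ} (hZ : 0 ≤ Z) (ZN a b : ℝ) :
    1 / 2 * (√(Z⁻¹ * exp (-a)) - √(ZN⁻¹ * exp (-b))) ^ 2
      ≤ 1 / Z * (exp (-a / 2) - exp (-b / 2)) ^ 2 + |1 / √Z - 1 / √ZN| ^ 2 * exp (-b) := by
  have hexp : exp (-b / 2) ^ 2 = exp (-b) := by rw [← exp_nat_mul]; ring_nf
  have hZ' : (1 / √Z) ^ 2 = 1 / Z := by rw [div_pow, one_pow, sq_sqrt hZ]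
  rw [sqrt_inv_mul_exp_neg, sqrt_inv_mul_exp_neg, ← hexp, ← hZ']
  exact half_sq_mul_sub_mul_le _ _ _ _

lemma exp_neg_le_one {a : ℝ} (ha : 0 ≤ a) : exp (-a) ≤ 1 :=
  exp_le_one_iff.mpr (neg_nonpos.mpr ha)

section Integrability

variable {X : Type*} [MeasurableSpace X] {μ : Measure X} [IsFiniteMeasure μ] {f g : X → ℝ}

lemma integrable_exp_neg (hf : Measurable f) (hf0 : ∀ u, 0 ≤ f u) :
    Integrable (fun u => exp (-f u)) μ :=
  .of_bound (by fun_prop) 1 <| .of_forall fun u => by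
    rw [norm_of_nonneg (exp_pos _).le]
    exact exp_neg_le_one (hf0 u)

lemma integrable_sq_exp_neg_half_sub (hf : Measurable f) (hg : Measurable g)
    (hf0 : ∀ u, 0 ≤ f u) (hg0 : ∀ u, 0 ≤ g u) :
    Integrable (fun u => (exp (-f u / 2) - exp (-g u / 2)) ^ 2) μ :=
  .of_bound (by fun_prop) 1 <| .of_forall fun u => by
    have hx : exp (-f u / 2) ≤ 1 := by rw [neg_div]; exact exp_neg_le_one (by linarith [hf0 u])
    have hy : exp (-g u / 2) ≤ 1 := by rw [neg_div]; exact exp_neg_le_one (by linarith [hg0 u])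
    rw [norm_of_nonneg (sq_nonneg _)]
    nlinarith [exp_pos (-f u / 2), exp_pos (-g u / 2)]

end Integrability

theorem hellinger_sq_le_I1_add_I2_general
    {X : Type*} [MeasurableSpace X] (μ0 : Measure X) [IsProbabilityMeasure μ0]
    (Φ ΦN : X → ℝ) (hΦm : Measurable Φ) (hΦNm : Measurable ΦN)
    (hΦ : ∀ u, 0 ≤ Φ u) (hΦN : ∀ u, 0 ≤ ΦN u)
    (Z ZN : ℝ)
    (hZpos : 0 < Z) :
    (1/2) * ∫ u, (Real.sqrt (Z⁻¹ * Real.exp (-Φ u))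
        - Real.sqrt (ZN⁻¹ * Real.exp (-ΦN u)))^2 ∂μ0
      ≤ (1/Z) * (∫ u, (Real.exp (-Φ u / 2) - Real.exp (-ΦN u / 2))^2 ∂μ0)
        + |1 / Real.sqrt Z - 1 / Real.sqrt ZN|^2 * ∫ u, Real.exp (-ΦN u) ∂μ0 := by
  have hI₁ := (integrable_sq_exp_neg_half_sub (μ := μ0) hΦm hΦNm hΦ hΦN).const_mul (1 / Z)
  have hI₂ := (integrable_exp_neg (μ := μ0) hΦNm hΦN).const_mul (|1 / √Z - 1 / √ZN| ^ 2)
  rw [← integral_const_mul, ← integral_const_mul, ← integral_const_mul, ← integral_add hI₁ hI₂]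
  exact integral_mono_of_nonneg (.of_forall fun u => by positivity) (hI₁.add hI₂)
    (.of_forall fun u => half_sq_sqrt_sub_sqrt_le hZpos.le ZN (Φ u) (ΦN u))

/-- Splitting bound for the squared Hellinger distance between the exact posterior
`dμ/dμ0 = Z⁻¹ e^{-Φ}` and the approximate posterior `dμᴺ/dμ0 = (Zᴺ)⁻¹ e^{-Φᴺ}`. -/
theorem hellinger_sq_le_I1_add_I2
    {X : Type*} [MeasurableSpace X] (μ0 : Measure X) [IsProbabilityMeasure μ0]
    (Φ ΦN : X → ℝ) (hΦm : Measurable Φ) (hΦNm : Measurable ΦN)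
    (hΦ : ∀ u, 0 ≤ Φ u) (hΦN : ∀ u, 0 ≤ ΦN u)
    (Z ZN : ℝ)
    (hZ : Z = ∫ u, Real.exp (-Φ u) ∂μ0) (hZN : ZN = ∫ u, Real.exp (-ΦN u) ∂μ0)
    (hZpos : 0 < Z) (hZNpos : 0 < ZN) :
    (1/2) * ∫ u, (Real.sqrt (Z⁻¹ * Real.exp (-Φ u))
        - Real.sqrt (ZN⁻¹ * Real.exp (-ΦN u)))^2 ∂μ0
      ≤ (1/Z) * (∫ u, (Real.exp (-Φ u / 2) - Real.exp (-ΦN u / 2))^2 ∂μ0)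
        + |1 / Real.sqrt Z - 1 / Real.sqrt ZN|^2 * ∫ u, Real.exp (-ΦN u) ∂μ0 :=
  hellinger_sq_le_I1_add_I2_general μ0 Φ ΦN hΦm hΦNm hΦ hΦN Z ZN hZpos
end

section
/- (Posterior convergence under pointwise forward-map convergence) Suppose G^N(u) → G(u) for μ_0-a.e. u, and all G^N, G are uniformly bounded measurable maps into ℝ^J. Then with Φ, Φ^N the corresponding Gaussian potentials and μ, μ^N the corresponding posteriors, d_Hell(μ^N, μ) → 0 as N → ∞. -/
/-!
The likelihoods `exp (-Φᴺ)` take values in `(0, 1]` and converge a.e. to `exp (-Φ)`, so by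
dominated convergence `Zᴺ → Z > 0`. Once `Zᴺ ≥ Z / 2`, the Hellinger integrand
`(√(Z⁻¹ e^{-Φ}) - √((Zᴺ)⁻¹ e^{-Φᴺ}))²` is bounded by `Z⁻¹ + 2 Z⁻¹`, and it tends to `0` a.e.,
so dominated convergence applies once more.
-/

open MeasureTheory Filter

section Hellinger

variable {X : Type*} [MeasurableSpace X] {μ : Measure X}

noncomputable def normalizedDensity (μ : Measure X) (f : X → ℝ) (x : X) : ℝ :=
  (∫ y, f y ∂μ)⁻¹ * f x

noncomputable def hellingerDist (μ : Measure X) (p q : X → ℝ) : ℝ :=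
  √((1 / 2) * ∫ x, (√(p x) - √(q x)) ^ 2 ∂μ)

theorem Real.sq_sqrt_sub_sqrt_le_add {a b : ℝ} (ha : 0 ≤ a) (hb : 0 ≤ b) :
    (√a - √b) ^ 2 ≤ a + b := by
  nlinarith [Real.sq_sqrt ha, Real.sq_sqrt hb,
    mul_nonneg (Real.sqrt_nonneg a) (Real.sqrt_nonneg b)]

theorem integral_pos_of_ae_pos [NeZero μ] {g : X → ℝ} (hg : Integrable g μ)
    (hpos : ∀ᵐ x ∂μ, 0 < g x) : 0 < ∫ x, g x ∂μ := by
  rw [integral_pos_iff_support_of_nonneg_ae (hpos.mono fun _ hx => hx.le) hg, pos_iff_ne_zero]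
  intro h_support
  have h_false : ∀ᵐ x ∂μ, False := by
    filter_upwards [hpos, measure_eq_zero_iff_ae_notMem.1 h_support] with x hx hx_support
    exact hx_support hx.ne'
  exact NeZero.ne μ (ae_eq_bot.1 (eventually_false_iff_eq_bot.1 h_false))

theorem tendsto_hellingerDist_normalizedDensity_of_tendsto_ae [IsFiniteMeasure μ] [NeZero μ]
    {f : ℕ → X → ℝ} {g : X → ℝ} {B : ℝ} (hf_meas : ∀ n, AEStronglyMeasurable (f n) μ)
    (hf_nonneg : ∀ n, ∀ᵐ x ∂μ, 0 ≤ f n x) (hf_le : ∀ n, ∀ᵐ x ∂μ, f n x ≤ B)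
    (hlim : ∀ᵐ x ∂μ, Tendsto (fun n => f n x) atTop (nhds (g x)))
    (hg_pos : ∀ᵐ x ∂μ, 0 < g x) :
    Tendsto (fun n => hellingerDist μ (normalizedDensity μ g) (normalizedDensity μ (f n)))
      atTop (nhds 0) := by
  set Z := ∫ x, g x ∂μ
  have hf_norm_le : ∀ n, ∀ᵐ x ∂μ, ‖f n x‖ ≤ B := fun n => by
    filter_upwards [hf_nonneg n, hf_le n] with x h0 hB
    rwa [Real.norm_of_nonneg h0]
  have hg_le : ∀ᵐ x ∂μ, g x ≤ B := by
    filter_upwards [hlim, ae_all_iff.2 hf_le] with x hx hB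
    exact le_of_tendsto' hx hB
  have hg_meas : AEStronglyMeasurable g μ :=
    aestronglyMeasurable_of_tendsto_ae atTop hf_meas hlim
  have hg_norm_le : ∀ᵐ x ∂μ, ‖g x‖ ≤ B := by
    filter_upwards [hg_pos, hg_le] with x h0 hB
    rwa [Real.norm_of_nonneg h0.le]
  have hZ_pos : 0 < Z := integral_pos_of_ae_pos (.of_bound hg_meas B hg_norm_le) hg_pos
  have hZn : Tendsto (fun n => ∫ x, f n x ∂μ) atTop (nhds Z) :=
    tendsto_integral_of_dominated_convergence (fun _ => B) hf_meas (integrable_const B)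
      hf_norm_le hlim
  have hZn_ge : ∀ᶠ n in atTop, Z / 2 ≤ ∫ x, f n x ∂μ :=
    hZn.eventually (eventually_ge_nhds (by linarith))
  have h_bound : ∀ᶠ n in atTop, ∀ᵐ x ∂μ,
      ‖(√(normalizedDensity μ g x) - √(normalizedDensity μ (f n) x)) ^ 2‖ ≤
        Z⁻¹ * B + (Z / 2)⁻¹ * B := by
    filter_upwards [hZn_ge] with n hn
    filter_upwards [hf_nonneg n, hf_le n, hg_pos, hg_le] with x hfx0 hfxB hgx0 hgxB
    have hZn_pos : 0 < ∫ x, f n x ∂μ := by linarith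
    rw [Real.norm_of_nonneg (sq_nonneg _)]
    calc _ ≤ normalizedDensity μ g x + normalizedDensity μ (f n) x :=
          Real.sq_sqrt_sub_sqrt_le_add (by unfold normalizedDensity; positivity)
            (by unfold normalizedDensity; positivity)
      _ ≤ Z⁻¹ * B + (Z / 2)⁻¹ * B := by
          unfold normalizedDensity
          have hB : 0 ≤ B := hfx0.trans hfxB
          gcongr
  have h_lim : ∀ᵐ x ∂μ, Tendsto
      (fun n => (√(normalizedDensity μ g x) - √(normalizedDensity μ (f n) x)) ^ 2)
      atTop (nhds 0) := by
    filter_upwards [hlim] with x hx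
    have h_density := ((hZn.inv₀ hZ_pos.ne').mul hx).sqrt
    simpa [normalizedDensity] using (h_density.const_sub (√(Z⁻¹ * g x))).pow 2
  have h_integral := tendsto_integral_filter_of_dominated_convergence _
    (.of_forall fun n => by unfold normalizedDensity; fun_prop) h_bound (integrable_const _) h_lim
  have h_dist := (h_integral.const_mul (1 / 2)).sqrt
  rwa [integral_zero, mul_zero, Real.sqrt_zero] at h_dist

end Hellinger

theorem posterior_convergence_pointwise_forward_general
    {X : Type*} [MeasurableSpace X] (μ0 : Measure X) [IsProbabilityMeasure μ0]
    {J : ℕ} (y : EuclideanSpace ℝ (Fin J)) (γ : ℝ)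
    (G : X → EuclideanSpace ℝ (Fin J)) (GN : ℕ → X → EuclideanSpace ℝ (Fin J))
    (hGNm : ∀ N, Measurable (GN N))
    (hconv : ∀ᵐ u ∂μ0, Tendsto (fun N => GN N u) atTop (nhds (G u)))
    (Φ : X → ℝ) (hΦ : Φ = fun u => ‖y - G u‖^2 / (2 * γ^2))
    (ΦN : ℕ → X → ℝ) (hΦN : ΦN = fun N u => ‖y - GN N u‖^2 / (2 * γ^2))
    (Z : ℝ) (hZ : Z = ∫ u, Real.exp (-Φ u) ∂μ0)
    (ZN : ℕ → ℝ) (hZN : ZN = fun N => ∫ u, Real.exp (-ΦN N u) ∂μ0) :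
    Tendsto (fun N => Real.sqrt ((1/2) * ∫ u,
        (Real.sqrt (Z⁻¹ * Real.exp (-Φ u))
          - Real.sqrt ((ZN N)⁻¹ * Real.exp (-ΦN N u)))^2 ∂μ0))
      atTop (nhds 0) := by
  subst hΦ hΦN hZ hZN
  set likelihood : EuclideanSpace ℝ (Fin J) → ℝ :=
    fun v => Real.exp (-(‖y - v‖ ^ 2 / (2 * γ ^ 2)))
  have h_cont : Continuous likelihood := by fun_prop
  have h_le_one : ∀ v, likelihood v ≤ 1 := fun v =>
    Real.exp_le_one_iff.2 (neg_nonpos.2 (by positivity))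
  refine tendsto_hellingerDist_normalizedDensity_of_tendsto_ae (B := 1)
    (fun N => (h_cont.measurable.comp (hGNm N)).aestronglyMeasurable)
    (fun N => .of_forall fun u => (Real.exp_pos _).le) (fun N => .of_forall fun u => h_le_one _)
    ?_ (.of_forall fun u => Real.exp_pos _)
  filter_upwards [hconv] with u hu
  exact (h_cont.tendsto _).comp hu

/-- Posterior convergence under pointwise (a.e.) convergence of uniformly bounded
forward maps: the Hellinger distance between the approximate posterior and the exact
posterior tends to zero. -/
theorem posterior_convergence_pointwise_forward
    {X : Type*} [MeasurableSpace X] (μ0 : Measure X) [IsProbabilityMeasure μ0]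
    {J : ℕ} (y : EuclideanSpace ℝ (Fin J)) (γ M : ℝ) (hγ : 0 < γ)
    (G : X → EuclideanSpace ℝ (Fin J)) (GN : ℕ → X → EuclideanSpace ℝ (Fin J))
    (hGm : Measurable G) (hGNm : ∀ N, Measurable (GN N))
    (hGb : ∀ u, ‖G u‖ ≤ M) (hGNb : ∀ N u, ‖GN N u‖ ≤ M)
    (hconv : ∀ᵐ u ∂μ0, Tendsto (fun N => GN N u) atTop (nhds (G u)))
    (Φ : X → ℝ) (hΦ : Φ = fun u => ‖y - G u‖^2 / (2 * γ^2))
    (ΦN : ℕ → X → ℝ) (hΦN : ΦN = fun N u => ‖y - GN N u‖^2 / (2 * γ^2))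
    (Z : ℝ) (hZ : Z = ∫ u, Real.exp (-Φ u) ∂μ0)
    (ZN : ℕ → ℝ) (hZN : ZN = fun N => ∫ u, Real.exp (-ΦN N u) ∂μ0) :
    Tendsto (fun N => Real.sqrt ((1/2) * ∫ u,
        (Real.sqrt (Z⁻¹ * Real.exp (-Φ u))
          - Real.sqrt ((ZN N)⁻¹ * Real.exp (-ΦN N u)))^2 ∂μ0))
      atTop (nhds 0) :=
  posterior_convergence_pointwise_forward_general μ0 y γ G GN hGNm hconv Φ hΦ ΦN hΦN Z hZ ZN hZN
end
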